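/- Let Γ be the cubic {x + i x³ : x ∈ ℝ}. Fix a > 0 and consider three-tuples z_λ = (−a − ia³, 0, λ + iλ³) with λ > 0. Then there exists λ0 > 0 such that S[Re K_Γ](z_λ) < 0 for all λ > λ0. -/
import Mathlib


/-- Real part of the restricted Cauchy kernel on the cubic `Γ = {x + i x³}`,
in the parameters `x`, `y`. -/
noncomputable def reKcub (x y : ℝ) : ℝ :=
  (3 * x ^ 2 * (x - y) - (x ^ 3 - y ^ 3)) /
    (Real.sqrt (1 + 9 * x ^ 4) * ((x - y) ^ 2 + (x ^ 3 - y ^ 3) ^ 2))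

/-- Symmetrized real part at the three-tuple `(-a - ia³, 0, λ + iλ³)` on the cubic. -/
noncomputable def SReCub (a l : ℝ) : ℝ :=
  2 * (reKcub (-a) 0 * reKcub (-a) l + reKcub 0 (-a) * reKcub 0 l +
    reKcub l (-a) * reKcub l 0)

set_option maxHeartbeats 1600000

/-- On the cubic `{x + ix³}`, for any fixed `a > 0`, the symmetrized real part at
`(-a - ia³, 0, λ + iλ³)` is negative for all sufficiently large `λ`. -/
theorem stmt19 (a : ℝ) (ha : 0 < a) :
    ∃ l0 : ℝ, 0 < l0 ∧ ∀ l : ℝ, l0 < l → SReCub a l < 0 := by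
  refine ⟨1 + 2*a + 2*(2+3*a)*(1+a^4)/(9*a), by positivity, ?_⟩
  intro l hl
  have h9a : (0:ℝ) < 9*a := by linarith
  have hnn : (0:ℝ) ≤ 2*(2+3*a)*(1+a^4)/(9*a) := by positivity
  have hl1 : 1 < l := by linarith
  have hl2a : 2*a < l := by linarith
  have hl0 : 0 < l := by linarith
  have hbound : 2*(2+3*a)*(1+a^4) < 9*a*l := by
    have hb : 2*(2+3*a)*(1+a^4)/(9*a) < l := by linarith
    rw [div_lt_iff₀ h9a] at hb
    linarith
  have hsa : (0:ℝ) ≤ 1 + 9*a^4 := by positivity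
  have hsl : (0:ℝ) ≤ 1 + 9*l^4 := by positivity
  have hs2 : Real.sqrt (1+9*a^4) * Real.sqrt (1+9*a^4) = 1 + 9*a^4 :=
    Real.mul_self_sqrt hsa
  have ht2 : Real.sqrt (1+9*l^4) * Real.sqrt (1+9*l^4) = 1 + 9*l^4 :=
    Real.mul_self_sqrt hsl
  have hP0 : (0:ℝ) < (l+a)^2 + (l^3+a^3)^2 := by positivity
  have hQ0 : (0:ℝ) < a^2 + a^6 := by positivity
  have hR0 : (0:ℝ) < l^2 + l^6 := by positivity
  have hP6 : l^6 ≤ (l+a)^2 + (l^3+a^3)^2 := by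
    nlinarith [sq_nonneg (l+a), mul_pos (pow_pos ha 3) (pow_pos hl0 3), pow_pos ha 6]
  -- evaluation of the six kernels
  have hA : reKcub (-a) 0 = -(2*a^3) / (Real.sqrt (1+9*a^4) * (a^2+a^6)) := by
    unfold reKcub
    rw [show (1 + 9 * (-a) ^ 4 : ℝ) = 1 + 9*a^4 by ring]
    congr 1 <;> ring
  have hB : reKcub (-a) l =
      ((l-2*a)*(l+a)^2) / (Real.sqrt (1+9*a^4) * ((l+a)^2 + (l^3+a^3)^2)) := by
    unfold reKcub
    rw [show (1 + 9 * (-a) ^ 4 : ℝ) = 1 + 9*a^4 by ring]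
    congr 1 <;> ring
  have hC : reKcub 0 (-a) = -(a^3) / (a^2+a^6) := by
    unfold reKcub
    rw [show (1 + 9 * (0:ℝ) ^ 4) = 1 by norm_num, Real.sqrt_one]
    congr 1 <;> ring
  have hD : reKcub 0 l = l^3 / (l^2+l^6) := by
    unfold reKcub
    rw [show (1 + 9 * (0:ℝ) ^ 4) = 1 by norm_num, Real.sqrt_one]
    congr 1 <;> ring
  have hE : reKcub l (-a) =
      (2*l^3+3*a*l^2-a^3) / (Real.sqrt (1+9*l^4) * ((l+a)^2 + (l^3+a^3)^2)) := by
    unfold reKcub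
    congr 1 <;> ring
  have hF : reKcub l 0 = 2*l^3 / (Real.sqrt (1+9*l^4) * (l^2+l^6)) := by
    unfold reKcub
    congr 1 <;> ring
  -- closed rational form
  have key : SReCub a l =
      2 * ( -(2*a^3) * ((l-2*a)*(l+a)^2)
              / ((1+9*a^4) * ((a^2+a^6) * ((l+a)^2+(l^3+a^3)^2)))
          + -(a^3) * l^3 / ((a^2+a^6) * (l^2+l^6))
          + (2*l^3+3*a*l^2-a^3) * (2*l^3)
              / ((1+9*l^4) * (((l+a)^2+(l^3+a^3)^2) * (l^2+l^6))) ) := by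
    unfold SReCub
    rw [hA, hB, hC, hD, hE, hF, div_mul_div_comm, div_mul_div_comm, div_mul_div_comm]
    rw [show Real.sqrt (1+9*a^4) * (a^2+a^6) * (Real.sqrt (1+9*a^4) * ((l+a)^2+(l^3+a^3)^2))
        = (1+9*a^4) * ((a^2+a^6) * ((l+a)^2+(l^3+a^3)^2)) by
          linear_combination ((a^2+a^6) * ((l+a)^2+(l^3+a^3)^2)) * hs2]
    rw [show Real.sqrt (1+9*l^4) * ((l+a)^2+(l^3+a^3)^2) * (Real.sqrt (1+9*l^4) * (l^2+l^6))
        = (1+9*l^4) * (((l+a)^2+(l^3+a^3)^2) * (l^2+l^6)) by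
          linear_combination (((l+a)^2+(l^3+a^3)^2) * (l^2+l^6)) * ht2]
  -- the concave-pair term is nonpositive
  have hT1 : -(2*a^3) * ((l-2*a)*(l+a)^2)
      / ((1+9*a^4) * ((a^2+a^6) * ((l+a)^2+(l^3+a^3)^2))) ≤ 0 := by
    apply div_nonpos_of_nonpos_of_nonneg
    · have h0 : (0:ℝ) ≤ (l-2*a)*(l+a)^2 := mul_nonneg (by linarith) (sq_nonneg _)
      nlinarith [pow_pos ha 3]
    · positivity
  -- the dominant comparison
  have key2 : (2*l^3+3*a*l^2-a^3) * (2*l^3) * (a^2+a^6)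
      < a^3*l^3*((1+9*l^4)*((l+a)^2+(l^3+a^3)^2)) := by
    have h1 : 2*l^3+3*a*l^2-a^3 ≤ (2+3*a)*l^3 := by
      nlinarith [mul_nonneg (mul_nonneg ha.le (sq_nonneg l)) (show (0:ℝ) ≤ l - 1 by linarith),
        pow_pos ha 3]
    have h2 : (0:ℝ) ≤ 2*l^3*(a^2+a^6) := by positivity
    have h3 : 9*l^4*l^6 ≤ (1+9*l^4)*((l+a)^2+(l^3+a^3)^2) := by
      linarith [mul_le_mul_of_nonneg_left hP6 (show (0:ℝ) ≤ 9*l^4 by positivity), hP0]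
    have h4 : l^7 ≤ l^13 := pow_le_pow_right₀ (by linarith) (by norm_num)
    calc (2*l^3+3*a*l^2-a^3) * (2*l^3) * (a^2+a^6)
        ≤ ((2+3*a)*l^3) * (2*l^3) * (a^2+a^6) := by
          linarith [mul_le_mul_of_nonneg_right h1 h2]
      _ = 2*(2+3*a)*(1+a^4)*(a^2*l^6) := by ring
      _ < 9*a*l*(a^2*l^6) := by
          linarith [mul_lt_mul_of_pos_right hbound (show (0:ℝ) < a^2*l^6 by positivity)]
      _ = 9*a^3*l^7 := by ring
      _ ≤ 9*a^3*l^13 := by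
          linarith [mul_le_mul_of_nonneg_left h4 (show (0:ℝ) ≤ 9*a^3 by positivity)]
      _ = a^3*l^3*(9*l^4*l^6) := by ring
      _ ≤ a^3*l^3*((1+9*l^4)*((l+a)^2+(l^3+a^3)^2)) := by
          linarith [mul_le_mul_of_nonneg_left h3 (show (0:ℝ) ≤ a^3*l^3 by positivity)]
  have hT23 : (2*l^3+3*a*l^2-a^3) * (2*l^3)
      / ((1+9*l^4) * (((l+a)^2+(l^3+a^3)^2) * (l^2+l^6)))
      < a^3 * l^3 / ((a^2+a^6) * (l^2+l^6)) := by
    rw [div_lt_div_iff₀ (by positivity) (by positivity)]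
    linarith [mul_lt_mul_of_pos_right key2 hR0]
  have hT2eq : -(a^3) * l^3 / ((a^2+a^6) * (l^2+l^6))
      = - (a^3 * l^3 / ((a^2+a^6) * (l^2+l^6))) := by ring
  rw [key]
  linarith [hT1, hT23, hT2eq.ge, hT2eq.le]
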